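/- arXiv:1907.13082 — 9 statements merged into one kernel-verified Lean document; each statement's English description precedes it below -/
import Mathlib

section
/- Let f(x) be a polynomial of degree n with real coefficients. Then there exists a unique pair of polynomials (a(x), b(x)) such that f(x) = a(x) + x·b(x), where a(x) is symmetric of degree n (i.e., x^n·a(1/x) = a(x)), and b(x) is symmetric of degree at most n-1 (i.e., x^{n-1}·b(1/x) = b(x)). Explicitly, a(x) = (f(x) - x^{n+1} f(1/x))/(1-x) and b(x) = (x^n f(1/x) - f(x))/(1-x). -/
open Polynomial

lemma reflect_reflect' (N : ℕ) (f : ℝ[X]) : reflect N (reflect N f) = f := by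
  ext i; rw [coeff_reflect, coeff_reflect, revAt_invol]

lemma reflect_neg' (N : ℕ) (f : ℝ[X]) : reflect N (-f) = -reflect N f := by
  ext i; rw [coeff_reflect, coeff_neg, coeff_neg, coeff_reflect]

lemma reflect_one_sub_X : reflect 1 ((1 : ℝ[X]) - X) = X - 1 := by
  ext i; rw [coeff_reflect]
  rcases i with _|_|i
  · rw [revAt_le (by norm_num)]; simp [coeff_one]
  · rw [revAt_le (by norm_num)]; simp [coeff_one]
  · rw [revAt_eq_self_of_lt (by omega)]
    simp [coeff_one, coeff_X, Nat.succ_ne_zero]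

lemma rev_eval_one (f : ℝ[X]) : f.reverse.eval 1 = f.eval 1 := by
  haveI := invertibleOne (α := ℝ)
  have h := eval₂_reflect_mul_pow (RingHom.id ℝ) (1:ℝ) f.natDegree f le_rfl
  rw [invOf_one, one_pow, mul_one] at h
  exact h

/-- Symmetric decomposition: every real polynomial `f` of degree `n` is uniquely
`f = a + X * b` with `a` symmetric of degree `n` and `b` symmetric of degree at most `n-1`;
explicitly `(1-X) * a = f - X * f.reverse` and `(1-X) * b = f.reverse - f`
(where `f.reverse = X^n * f(1/X)`). -/
theorem stmt0 (n : ℕ) (f : Polynomial ℝ) (hf : f.natDegree = n) :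
    ∃! p : Polynomial ℝ × Polynomial ℝ,
      f = p.1 + X * p.2 ∧
      p.1.natDegree ≤ n ∧ (∀ i ≤ n, p.1.coeff i = p.1.coeff (n - i)) ∧
      p.2.natDegree ≤ n - 1 ∧ (∀ i ≤ n - 1, p.2.coeff i = p.2.coeff (n - 1 - i)) ∧
      (1 - X) * p.1 = f - X * f.reverse ∧
      (1 - X) * p.2 = f.reverse - f := by
  have h1X : (1 - X : ℝ[X]) ≠ 0 := by
    intro h
    have := congrArg (fun p => coeff p 1) h
    simp [coeff_one] at this
  have hdeg1X : (1 - X : ℝ[X]).natDegree = 1 := by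
    have h : (1 - X : ℝ[X]) = -(X - C 1) := by rw [C_1]; ring
    rw [h, natDegree_neg, natDegree_X_sub_C]
  have hrev : f.reverse = reflect n f := by rw [reverse, hf]
  have hrevdeg : f.reverse.natDegree ≤ n := hf ▸ f.reverse_natDegree_le
  obtain ⟨A0, hA0⟩ : (X - C 1 : ℝ[X]) ∣ (f - X * f.reverse) := by
    rw [dvd_iff_isRoot]
    simp [IsRoot, rev_eval_one]
  obtain ⟨B0, hB0⟩ : (X - C 1 : ℝ[X]) ∣ (f.reverse - f) := by
    rw [dvd_iff_isRoot]
    simp [IsRoot, rev_eval_one]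
  set A := -A0 with hAdef
  set B := -B0 with hBdef
  have hA : (1 - X) * A = f - X * f.reverse := by
    rw [hA0, hAdef, show ((X : ℝ[X]) - C 1) = X - 1 by rw [C_1]]; ring
  have hB : (1 - X) * B = f.reverse - f := by
    rw [hB0, hBdef, show ((X : ℝ[X]) - C 1) = X - 1 by rw [C_1]]; ring
  have hsum : f = A + X * B := by
    apply mul_left_cancel₀ h1X
    rw [mul_add, hA, ← mul_assoc, mul_comm (1 - X : ℝ[X]) X, mul_assoc, hB]
    ring
  have hAdeg : A.natDegree ≤ n := by
    by_cases hA0' : A = 0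
    · simp [hA0']
    · have h1 : ((1 - X : ℝ[X]) * A).natDegree = 1 + A.natDegree := by
        rw [natDegree_mul h1X hA0', hdeg1X]
      have h2 : (f - X * f.reverse).natDegree ≤ n + 1 := by
        apply le_trans (natDegree_sub_le _ _)
        simp only [max_le_iff]
        refine ⟨by omega, ?_⟩
        apply le_trans natDegree_mul_le
        simp [natDegree_X]; omega
      rw [hA] at h1
      omega
  have hBdeg : B.natDegree ≤ n - 1 := by
    by_cases hB0' : B = 0
    · simp [hB0']
    · have h1 : ((1 - X : ℝ[X]) * B).natDegree = 1 + B.natDegree := by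
        rw [natDegree_mul h1X hB0', hdeg1X]
      have h2 : (f.reverse - f).natDegree ≤ n := by
        apply le_trans (natDegree_sub_le _ _)
        simp only [max_le_iff]; omega
      rw [hB] at h1
      omega
  -- symmetry of A
  have hAsym : reflect n A = A := by
    apply mul_left_cancel₀ h1X
    have key : reflect (1 + n) ((1 - X) * A) = (X - 1) * reflect n A := by
      rw [reflect_mul (1 - X) A (by rw [hdeg1X]) hAdeg, reflect_one_sub_X]
    have e1 : reflect (1 + n) f = X * reflect n f := by
      have h := reflect_mul (1 : ℝ[X]) f (F := 1) (G := n) (by simp) hf.le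
      rw [one_mul] at h
      rw [h]
      congr 1
      have := reflect_monomial 1 0 (R := ℝ)
      simpa using this
    have e2 : reflect (1 + n) (X * f.reverse) = f := by
      rw [reflect_mul X f.reverse natDegree_X_le hrevdeg, hrev, reflect_reflect']
      have h : reflect 1 (X : ℝ[X]) = 1 := by
        have := reflect_monomial 1 1 (R := ℝ); simpa using this
      rw [h, one_mul]
    have key2 : reflect (1 + n) (f - X * f.reverse) = X * reflect n f - f := by
      rw [sub_eq_add_neg, reflect_add, reflect_neg', e1, e2]; ring
    rw [hA, key2] at key
    rw [hA, hrev]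
    linear_combination key
  have hAcoeff : ∀ i ≤ n, A.coeff i = A.coeff (n - i) := by
    intro i hi
    conv_lhs => rw [← hAsym]
    rw [coeff_reflect, revAt_le hi]
  -- symmetry of B
  have hBcoeff : ∀ i ≤ n - 1, B.coeff i = B.coeff (n - 1 - i) := by
    rcases n with _|m
    · intro i hi
      simp only [Nat.zero_sub, Nat.le_zero] at hi ⊢
      subst hi; rfl
    · have hBdeg' : B.natDegree ≤ m := hBdeg
      have hBsym : reflect m B = B := by
        apply mul_left_cancel₀ h1X
        have key : reflect (1 + m) ((1 - X) * B) = (X - 1) * reflect m B := by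
          rw [reflect_mul (1 - X) B (by rw [hdeg1X]) hBdeg', reflect_one_sub_X]
        have key2 : reflect (1 + m) (f.reverse - f) = f - f.reverse := by
          have hn : m + 1 = 1 + m := by omega
          rw [sub_eq_add_neg, reflect_add, reflect_neg', hrev]
          rw [show reflect (1 + m) (reflect (m + 1) f) = f by
            rw [hn]; exact reflect_reflect' _ _]
          rw [← hn, ← hrev]
          ring
        rw [hB, key2] at key
        rw [hB]
        linear_combination key
      intro i hi
      simp only [Nat.add_sub_cancel] at hi ⊢
      conv_lhs => rw [← hBsym]
      rw [coeff_reflect, revAt_le hi]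
  refine ⟨⟨A, B⟩, ⟨hsum, hAdeg, hAcoeff, hBdeg, hBcoeff, hA, hB⟩, ?_⟩
  rintro ⟨q1, q2⟩ ⟨-, -, -, -, -, hq1, hq2⟩
  have e1 : q1 = A := mul_left_cancel₀ h1X (hq1.trans hA.symm)
  have e2 : q2 = B := mul_left_cancel₀ h1X (hq2.trans hB.symm)
  simp [e1, e2]
end

section
/- If a polynomial f(x) = Σ_{i=0}^n f_i x^i with nonnegative coefficients is symmetric (f_i = f_{n-i} for all i) and has only real (necessarily negative or zero) zeros, then f is γ-positive, i.e., writing f(x) = Σ_{k=0}^{⌊n/2⌋} γ_k x^k (1+x)^{n-2k}, all γ_k are nonnegative. -/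
/-!
Since all complex zeros of `f` are real, `f` splits over `ℝ`. Nonnegative coefficients and
`f 0 = f_n > 0` make every zero negative, and the symmetry `f = reverse f` makes the multiset
of zeros invariant under `a ↦ a⁻¹`. Pairing each zero `a ≠ -1` with `a⁻¹` gives the factor
`(x - a)(x - a⁻¹) = (1 + x)² + (-a - a⁻¹ - 2) x`, whose middle coefficient is nonnegative
because `a < 0`, while each zero `-1` gives the factor `1 + x`. Multiplying a γ-positive
polynomial by `1 + x` or by `(1 + x)² + b x` with `b ≥ 0` keeps it γ-positive.
-/

open Polynomial

theorem add_inv_add_two_nonpos {K : Type*} [Field K] [LinearOrder K] [IsStrictOrderedRing K]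
    {a : K} (ha : a < 0) : a + a⁻¹ + 2 ≤ 0 := by
  have h : a * (a + a⁻¹ + 2) = (a + 1) ^ 2 := by
    rw [mul_add, mul_add, mul_inv_cancel₀ ha.ne]; ring
  nlinarith [sq_nonneg (a + 1)]

namespace Polynomial

section GammaPositive

variable {R : Type*} [CommSemiring R] [PartialOrder R]

def IsGammaPositive (n : ℕ) (p : R[X]) : Prop :=
  ∃ γ : ℕ → R, (∀ k, 0 ≤ γ k) ∧
    p = ∑ k ∈ Finset.range (n / 2 + 1), C (γ k) * X ^ k * (1 + X) ^ (n - 2 * k)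

namespace IsGammaPositive

variable {n : ℕ} {p q : R[X]}

theorem one [IsOrderedRing R] : IsGammaPositive 0 (1 : R[X]) :=
  ⟨fun _ ↦ 1, fun _ ↦ zero_le_one, by simp⟩

theorem add [IsOrderedRing R] (hp : IsGammaPositive n p) (hq : IsGammaPositive n q) :
    IsGammaPositive n (p + q) := by
  obtain ⟨γ, hγ, rfl⟩ := hp
  obtain ⟨δ, hδ, rfl⟩ := hq
  refine ⟨γ + δ, fun k ↦ add_nonneg (hγ k) (hδ k), ?_⟩
  simp only [Pi.add_apply, C_add, add_mul, Finset.sum_add_distrib]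

theorem C_mul [IsOrderedRing R] (hp : IsGammaPositive n p) {c : R} (hc : 0 ≤ c) :
    IsGammaPositive n (C c * p) := by
  obtain ⟨γ, hγ, rfl⟩ := hp
  refine ⟨fun k ↦ c * γ k, fun k ↦ mul_nonneg hc (hγ k), ?_⟩
  simp only [Finset.mul_sum, Polynomial.C_mul, mul_assoc]

theorem one_add_X_mul (hp : IsGammaPositive n p) :
    IsGammaPositive (n + 1) ((1 + X) * p) := by
  obtain ⟨γ, hγ, rfl⟩ := hp
  refine ⟨fun k ↦ if k ≤ n / 2 then γ k else 0,
    fun k ↦ by dsimp only; split_ifs <;> simp [hγ], ?_⟩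
  rw [Finset.mul_sum]
  apply Finset.sum_subset_zero_on_sdiff
  · exact Finset.range_subset_range.mpr (by omega)
  · intro k hk
    have : ¬ k ≤ n / 2 := by simp only [Finset.mem_sdiff, Finset.mem_range] at hk; omega
    simp [this]
  · intro k hk
    have hk : k ≤ n / 2 := Nat.lt_succ_iff.mp (Finset.mem_range.mp hk)
    dsimp only
    rw [if_pos hk, show n + 1 - 2 * k = (n - 2 * k) + 1 by omega, pow_succ]
    ring

theorem X_mul (hp : IsGammaPositive n p) : IsGammaPositive (n + 2) (X * p) := by
  obtain ⟨γ, hγ, rfl⟩ := hp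
  refine ⟨fun k ↦ if k = 0 then 0 else γ (k - 1),
    fun k ↦ by dsimp only; split_ifs <;> simp [hγ], ?_⟩
  rw [show (n + 2) / 2 + 1 = n / 2 + 1 + 1 by omega, Finset.mul_sum]
  conv_rhs => rw [Finset.sum_range_succ']
  simp only [if_pos, if_neg (Nat.succ_ne_zero _), Nat.add_sub_cancel, C_0, zero_mul, add_zero,
    show ∀ k, n + 2 - 2 * (k + 1) = n - 2 * k by omega]
  exact Finset.sum_congr rfl fun k _ ↦ by ring

theorem one_add_X_sq_add_C_mul_X_mul [IsOrderedRing R] (hp : IsGammaPositive n p) {b : R}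
    (hb : 0 ≤ b) :
    IsGammaPositive (n + 2) (((1 + X) ^ 2 + C b * X) * p) := by
  have h := hp.one_add_X_mul.one_add_X_mul.add (hp.X_mul.C_mul hb)
  convert h using 1
  ring

end IsGammaPositive

end GammaPositive

theorem reverse_eq_self_of_coeff_eq {R : Type*} [Semiring R] {f : R[X]}
    (h : ∀ i ≤ f.natDegree, f.coeff i = f.coeff (f.natDegree - i)) : f.reverse = f := by
  ext i
  rw [coeff_reverse]
  rcases le_or_gt i f.natDegree with hi | hi
  · rw [revAt_le hi, ← h i hi]
  · rw [revAt_eq_self_of_lt hi]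

theorem eval_pos_of_coeff_nonneg {R : Type*} [Semiring R] [PartialOrder R] [IsOrderedRing R]
    {f : R[X]} (hf : ∀ i, 0 ≤ f.coeff i) (h0 : 0 < f.coeff 0) {x : R} (hx : 0 ≤ x) :
    0 < f.eval x := by
  rw [eval_eq_sum_range]
  refine h0.trans_le ?_
  simpa using Finset.single_le_sum (f := fun i ↦ f.coeff i * x ^ i)
    (fun i _ ↦ mul_nonneg (hf i) (pow_nonneg hx i)) (Finset.mem_range.mpr (Nat.succ_pos _))

theorem splits_of_forall_isRoot_im_eq_zero {f : ℝ[X]}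
    (h : ∀ z : ℂ, (f.map (algebraMap ℝ ℂ)).IsRoot z → z.im = 0) : f.Splits :=
  Splits.of_splits_map (algebraMap ℝ ℂ) (IsAlgClosed.splits _) fun z hz ↦
    ⟨z.re, Complex.ext (by simp) (by simp [h z (isRoot_of_mem_roots hz)])⟩

section Reverse

variable {K : Type*} [Field K]

theorem reverse_X_sub_C {a : K} (ha : a ≠ 0) : (X - C a).reverse = C (-a) * (X - C a⁻¹) := by
  have h : C a * C a⁻¹ = (1 : K[X]) := by rw [← C_mul, mul_inv_cancel₀ ha, C_1]
  have hX : (X : K[X]).reverse = 1 := by rw [← mul_one X, reverse_X_mul, ← C_1, reverse_C]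
  rw [sub_eq_add_neg, ← C_neg, reverse_add_C, hX, natDegree_X, C_neg]
  linear_combination (-1 : K[X]) * h

theorem reverse_multiset_prod_X_sub_C {s : Multiset K} (hs : 0 ∉ s) :
    (s.map (X - C ·)).prod.reverse = C (s.map (-·)).prod * (s.map (X - C ·⁻¹)).prod := by
  induction s using Multiset.induction_on with
  | empty => simpa using reverse_C (1 : K)
  | cons a s ih =>
    rw [Multiset.mem_cons, not_or] at hs
    simp only [Multiset.map_cons, Multiset.prod_cons, reverse_mul_of_domain, ih hs.2,
      reverse_X_sub_C (Ne.symm hs.1), C_mul]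
    ring

theorem Splits.roots_reverse {f : K[X]} (hf : f.Splits) (h0 : f.coeff 0 ≠ 0) :
    f.reverse.roots = f.roots.map (·⁻¹) := by
  have hf0 : f ≠ 0 := fun h ↦ h0 (by simp [h])
  have hroot0 : 0 ∉ f.roots := by
    rwa [mem_roots hf0, IsRoot, ← coeff_zero_eq_eval_zero]
  have hprod : (f.roots.map (-·)).prod ≠ 0 :=
    Multiset.prod_ne_zero (by simpa using hroot0)
  conv_lhs => rw [hf.eq_prod_roots]
  rw [reverse_mul_of_domain, reverse_C, reverse_multiset_prod_X_sub_C hroot0, ← mul_assoc,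
    ← C_mul, roots_C_mul _ (mul_ne_zero (leadingCoeff_ne_zero.mpr hf0) hprod)]
  change (f.roots.map ((X - C ·) ∘ (·⁻¹))).prod.roots = _
  rw [← Multiset.map_map, roots_multiset_prod_X_sub_C]

end Reverse

theorem X_sub_C_mul_X_sub_C_inv {K : Type*} [Field K] {a : K} (ha : a ≠ 0) :
    (X - C a) * (X - C a⁻¹) = (1 + X) ^ 2 + C (-(a + a⁻¹ + 2)) * X := by
  have h : C a * C a⁻¹ = (1 : K[X]) := by rw [← C_mul, mul_inv_cancel₀ ha, C_1]
  simp only [C_neg, C_add, C_ofNat]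
  linear_combination h

theorem isGammaPositive_multiset_prod_X_sub_C {K : Type*} [Field K] [LinearOrder K]
    [IsStrictOrderedRing K] {s : Multiset K} (hneg : ∀ a ∈ s, a < 0)
    (hinv : s.map (·⁻¹) = s) : IsGammaPositive (Multiset.card s) (s.map (X - C ·)).prod := by
  induction s using Multiset.strongInductionOn with
  | ih s ih =>
  rcases s.empty_or_exists_mem with rfl | ⟨a, ha⟩
  · simpa using IsGammaPositive.one
  by_cases ha1 : a = -1
  · subst ha1
    have hs : s = -1 ::ₘ s.erase (-1) := (Multiset.cons_erase ha).symm
    have ht := ih _ (Multiset.erase_lt.mpr ha)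
      (fun b hb ↦ hneg b (Multiset.mem_of_mem_erase hb))
      (by rw [Multiset.map_erase _ inv_injective, hinv, inv_neg, inv_one])
    rw [hs, Multiset.map_cons, Multiset.prod_cons, Multiset.card_cons]
    convert ht.one_add_X_mul using 2
    rw [C_neg, C_1, sub_neg_eq_add, add_comm]
  · have ha0 : a ≠ 0 := (hneg a ha).ne
    have hainv : a⁻¹ ≠ a := fun h ↦ ha1 <| by
      have h2 : a * a = 1 := by nth_rewrite 2 [← h]; exact mul_inv_cancel₀ ha0
      exact (mul_self_eq_one_iff.mp h2).resolve_left fun h1 ↦ by linarith [hneg a ha]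
    have ha' : a⁻¹ ∈ s.erase a :=
      (Multiset.mem_erase_of_ne hainv).mpr (hinv ▸ Multiset.mem_map_of_mem _ ha)
    have hs : s = a ::ₘ a⁻¹ ::ₘ (s.erase a).erase a⁻¹ := by
      rw [Multiset.cons_erase ha', Multiset.cons_erase ha]
    have ht := ih _ ((Multiset.erase_le _ _).trans_lt (Multiset.erase_lt.mpr ha))
      (fun b hb ↦ hneg b (Multiset.mem_of_mem_erase (Multiset.mem_of_mem_erase hb)))
      (by rw [Multiset.map_erase _ inv_injective, Multiset.map_erase _ inv_injective, hinv,
        inv_inv, Multiset.erase_comm])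
    rw [hs]
    simp only [Multiset.map_cons, Multiset.prod_cons, Multiset.card_cons, ← mul_assoc,
      X_sub_C_mul_X_sub_C_inv ha0]
    exact ht.one_add_X_sq_add_C_mul_X_mul (neg_nonneg.mpr (add_inv_add_two_nonpos (hneg a ha)))

end Polynomial

/-- A symmetric polynomial with nonnegative coefficients having only real zeros
is γ-positive. -/
theorem stmt1 (n : ℕ) (f : Polynomial ℝ) (hdeg : f.natDegree = n)
    (hnonneg : ∀ i, 0 ≤ f.coeff i)
    (hsym : ∀ i ≤ n, f.coeff i = f.coeff (n - i))
    (hreal : ∀ z : ℂ, (f.map (algebraMap ℝ ℂ)).IsRoot z → z.im = 0) :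
    ∃ γ : ℕ → ℝ, (∀ k, 0 ≤ γ k) ∧
      f = ∑ k ∈ Finset.range (n / 2 + 1), C (γ k) * X ^ k * (1 + X) ^ (n - 2 * k) := by
  obtain rfl | hf0 := eq_or_ne f 0
  · exact ⟨0, fun _ ↦ le_rfl, by simp⟩
  subst hdeg
  have hsplit := splits_of_forall_isRoot_im_eq_zero hreal
  have hcoeff0 : 0 < f.coeff 0 := by
    rw [hsym 0 (Nat.zero_le _), Nat.sub_zero]
    exact (hnonneg _).lt_of_ne (leadingCoeff_ne_zero.mpr hf0).symm
  have hneg : ∀ a ∈ f.roots, a < 0 := fun a ha ↦ not_le.mp fun h ↦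
    (eval_pos_of_coeff_nonneg hnonneg hcoeff0 h).ne' (isRoot_of_mem_roots ha)
  have hinv : f.roots.map (·⁻¹) = f.roots := by
    rw [← hsplit.roots_reverse hcoeff0.ne', reverse_eq_self_of_coeff_eq hsym]
  have hlc : 0 ≤ f.leadingCoeff := hnonneg _
  have hγ := (isGammaPositive_multiset_prod_X_sub_C hneg hinv).C_mul hlc
  rwa [← hsplit.natDegree_eq_card_roots, ← hsplit.eq_prod_roots] at hγ
end

section
/- If f(x) = Σ_{k=0}^{⌊n/2⌋} γ_k x^k (1+x)^{n-2k} with all γ_k ≥ 0, then f is unimodal: its coefficient sequence f_0, f_1, ..., f_n satisfies f_0 ≤ f_1 ≤ ... ≤ f_{⌊n/2⌋} ≥ ... ≥ f_n, and f is symmetric (f_i = f_{n-i}). -/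
open Polynomial

lemma term_coeff_aux (a : ℝ) (k m i : ℕ) :
    (C a * X ^ k * (1 + X) ^ m).coeff i =
      if k ≤ i then a * (m.choose (i - k) : ℝ) else 0 := by
  rw [mul_comm (C a) (X ^ k), mul_assoc, mul_comm (X ^ k), coeff_mul_X_pow']
  split
  · rw [coeff_C_mul, coeff_one_add_X_pow]
  · rfl

/-- A γ-positive polynomial is symmetric and unimodal with mode ⌊n/2⌋. -/
theorem stmt2 (n : ℕ) (γ : ℕ → ℝ) (hγ : ∀ k, 0 ≤ γ k) (f : Polynomial ℝ)
    (hf : f = ∑ k ∈ Finset.range (n / 2 + 1), C (γ k) * X ^ k * (1 + X) ^ (n - 2 * k)) :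
    (∀ i < n / 2, f.coeff i ≤ f.coeff (i + 1)) ∧
    (∀ i, n / 2 ≤ i → i < n → f.coeff (i + 1) ≤ f.coeff i) ∧
    (∀ i ≤ n, f.coeff i = f.coeff (n - i)) := by
  have key : ∀ i, f.coeff i = ∑ k ∈ Finset.range (n / 2 + 1),
      (if k ≤ i then γ k * ((n - 2 * k).choose (i - k) : ℝ) else 0) := by
    intro i
    rw [hf, finset_sum_coeff]
    exact Finset.sum_congr rfl fun k _ => term_coeff_aux _ _ _ _
  have hmono : ∀ i < n / 2, f.coeff i ≤ f.coeff (i + 1) := by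
    intro i hi
    rw [key, key]
    refine Finset.sum_le_sum fun k hk => ?_
    rcases le_or_gt k i with h | h
    · rw [if_pos h, if_pos (h.trans (Nat.le_succ i))]
      refine mul_le_mul_of_nonneg_left ?_ (hγ k)
      have hk' : k ≤ n / 2 := Nat.lt_succ_iff.mp (Finset.mem_range.mp hk)
      have h1 : i + 1 - k = (i - k) + 1 := by omega
      rw [h1]
      exact_mod_cast Nat.choose_le_succ_of_lt_half_left (by omega)
    · rw [if_neg (by omega)]
      split
      · exact mul_nonneg (hγ k) (Nat.cast_nonneg _)
      · exact le_rfl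
  have hsymm : ∀ i ≤ n, f.coeff i = f.coeff (n - i) := by
    intro i hi
    rw [key, key]
    refine Finset.sum_congr rfl fun k hk => ?_
    have hk' : k ≤ n / 2 := Nat.lt_succ_iff.mp (Finset.mem_range.mp hk)
    rcases lt_or_ge i k with h | h
    · rw [if_neg (by omega)]
      rcases le_or_gt k (n - i) with h2 | h2
      · rw [if_pos h2, Nat.choose_eq_zero_of_lt (by omega)]
        simp
      · rw [if_neg (by omega)]
    · rw [if_pos h]
      rcases le_or_gt i (n - k) with h2 | h2
      · rw [if_pos (by omega)]
        congr 2
        rw [← Nat.choose_symm (by omega : i - k ≤ n - 2 * k)]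
        congr 1
        omega
      · rw [Nat.choose_eq_zero_of_lt (by omega), if_neg (by omega)]
        simp
  refine ⟨hmono, fun i hi hi' => ?_, hsymm⟩
  have e1 : f.coeff (i + 1) = f.coeff (n - (i + 1)) := hsymm _ (by omega)
  have e2 : f.coeff i = f.coeff (n - i) := hsymm _ (by omega)
  rcases lt_or_ge (n - (i + 1)) (n / 2) with h | h
  · have := hmono _ h
    have h3 : n - (i + 1) + 1 = n - i := by omega
    rw [h3] at this
    rw [e1, e2]; exact this
  · -- then n - i - 1 = n/2 = i (n odd), so coeffs equal
    have h4 : n - (i + 1) = i := by omega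
    rw [e1, h4]
end

section
/- If a polynomial f of degree n is bi-γ-positive, i.e., in its symmetric decomposition f(x) = a(x) + x·b(x) both a(x) and b(x) are γ-positive, then f is alternatingly increasing: f_0 ≤ f_n ≤ f_1 ≤ f_{n-1} ≤ ... ≤ f_{⌊(n+1)/2⌋}. -/
open Polynomial

noncomputable def gp (γ : ℕ → ℝ) (M N : ℕ) : Polynomial ℝ :=
  ∑ k ∈ Finset.range M, C (γ k) * X ^ k * (1 + X) ^ (N - 2 * k)

lemma gp_coeff (γ : ℕ → ℝ) (M N j : ℕ) :
    (gp γ M N).coeff j =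
      ∑ k ∈ Finset.range M, γ k * (if k ≤ j then ((N - 2 * k).choose (j - k) : ℝ) else 0) := by
  unfold gp
  rw [Polynomial.finset_sum_coeff]
  refine Finset.sum_congr rfl fun k _ => ?_
  have h : C (γ k) * X ^ k * (1 + X) ^ (N - 2 * k)
      = C (γ k) * ((1 + X) ^ (N - 2 * k) * X ^ k) := by ring
  rw [h, coeff_C_mul, coeff_mul_X_pow']
  split_ifs with hk
  · rw [coeff_one_add_X_pow]
  · simp

lemma gp_nonneg (γ : ℕ → ℝ) (hγ : ∀ k, 0 ≤ γ k) (M N j : ℕ) :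
    0 ≤ (gp γ M N).coeff j := by
  rw [gp_coeff]
  refine Finset.sum_nonneg fun k _ => mul_nonneg (hγ k) ?_
  split_ifs <;> positivity

lemma choose_mono_aux (M r : ℕ) (h : 2 * r + 1 ≤ M) : M.choose r ≤ M.choose (r + 1) := by
  rcases lt_or_ge r (M / 2) with h' | h'
  · exact Nat.choose_le_succ_of_lt_half_left h'
  · have hM : M = 2 * r + 1 := by omega
    subst hM
    have := Nat.choose_symm (n := 2 * r + 1) (k := r + 1) (by omega)
    have hr : 2 * r + 1 - (r + 1) = r := by omega
    rw [hr] at this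
    exact this.le

lemma gp_mono (γ : ℕ → ℝ) (hγ : ∀ k, 0 ≤ γ k) (M N j : ℕ) (h : 2 * (j + 1) ≤ N + 1) :
    (gp γ M N).coeff j ≤ (gp γ M N).coeff (j + 1) := by
  rw [gp_coeff, gp_coeff]
  refine Finset.sum_le_sum fun k _ => mul_le_mul_of_nonneg_left ?_ (hγ k)
  by_cases hk : k ≤ j
  · rw [if_pos hk, if_pos (by omega)]
    have h2 : j + 1 - k = (j - k) + 1 := by omega
    rw [h2]
    exact_mod_cast choose_mono_aux (N - 2 * k) (j - k) (by omega)
  · rw [if_neg hk]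
    split_ifs <;> positivity

lemma gp_symm (γ : ℕ → ℝ) (M N j : ℕ) (hM : ∀ k ∈ Finset.range M, 2 * k ≤ N) (hj : j ≤ N) :
    (gp γ M N).coeff (N - j) = (gp γ M N).coeff j := by
  rw [gp_coeff, gp_coeff]
  refine Finset.sum_congr rfl fun k hk => ?_
  have hkN := hM k hk
  congr 1
  by_cases h1 : k ≤ j <;> by_cases h2 : k ≤ N - j
  · rw [if_pos h1, if_pos h2]
    have he : N - j - k = (N - 2 * k) - (j - k) := by omega
    rw [he, Nat.choose_symm (by omega)]
  · rw [if_neg h2, if_pos h1]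
    rw [Nat.choose_eq_zero_of_lt (by omega : N - 2 * k < j - k)]
    simp
  · rw [if_pos h2, if_neg h1]
    rw [Nat.choose_eq_zero_of_lt (by omega : N - 2 * k < N - j - k)]
    simp
  · rw [if_neg h1, if_neg h2]

/-- A bi-γ-positive polynomial of degree n is alternatingly increasing:
f₀ ≤ f_n ≤ f₁ ≤ f_{n-1} ≤ ⋯ ≤ f_{⌊(n+1)/2⌋}. -/
theorem stmt3 (n : ℕ) (f a b : Polynomial ℝ) (hdeg : f.natDegree = n)
    (hdecomp : f = a + X * b)
    (ha : ∃ γ : ℕ → ℝ, (∀ k, 0 ≤ γ k) ∧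
      a = ∑ k ∈ Finset.range (n / 2 + 1), C (γ k) * X ^ k * (1 + X) ^ (n - 2 * k))
    (hb : ∃ δ : ℕ → ℝ, (∀ k, 0 ≤ δ k) ∧
      b = ∑ k ∈ Finset.range ((n - 1) / 2 + 1), C (δ k) * X ^ k * (1 + X) ^ (n - 1 - 2 * k)) :
    (∀ i, i < n - i → f.coeff i ≤ f.coeff (n - i)) ∧
    (∀ i, i + 1 ≤ n - i → f.coeff (n - i) ≤ f.coeff (i + 1)) := by
  obtain ⟨γ, hγ, haeq⟩ := ha
  obtain ⟨δ, hδ, hbeq⟩ := hb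
  have ha' : a = gp γ (n / 2 + 1) n := haeq
  have hb' : b = gp δ ((n - 1) / 2 + 1) (n - 1) := hbeq
  have hMa : ∀ k ∈ Finset.range (n / 2 + 1), 2 * k ≤ n := by
    intro k hk; rw [Finset.mem_range] at hk; omega
  have hMb : ∀ k ∈ Finset.range ((n - 1) / 2 + 1), 2 * k ≤ n - 1 := by
    intro k hk; rw [Finset.mem_range] at hk; omega
  have fc : ∀ j, f.coeff (j + 1) = a.coeff (j + 1) + b.coeff j := by
    intro j; rw [hdecomp]; simp [coeff_X_mul]
  have fc0 : f.coeff 0 = a.coeff 0 := by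
    rw [hdecomp]; simp [coeff_add, mul_coeff_zero]
  have key : ∀ i, i < n → f.coeff (n - i) = a.coeff i + b.coeff i := by
    intro i hi
    have hni : n - i = (n - i - 1) + 1 := by omega
    rw [hni, fc]
    have h1 : a.coeff (n - i - 1 + 1) = a.coeff i := by
      rw [show n - i - 1 + 1 = n - i by omega, ha']
      exact gp_symm γ _ n i hMa (by omega)
    have h2 : b.coeff (n - i - 1) = b.coeff i := by
      rw [show n - i - 1 = (n - 1) - i by omega, hb']
      exact gp_symm δ _ (n - 1) i hMb (by omega)
    rw [h1, h2]
  constructor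
  · intro i hi
    rw [key i (by omega)]
    cases i with
    | zero =>
      rw [fc0]
      have := gp_nonneg δ hδ ((n - 1) / 2 + 1) (n - 1) 0
      rw [← hb'] at this
      linarith
    | succ m =>
      rw [fc]
      have : b.coeff m ≤ b.coeff (m + 1) := by
        rw [hb']
        exact gp_mono δ hδ _ (n - 1) m (by omega)
      linarith
  · intro i hi
    rw [key i (by omega), fc]
    have : a.coeff i ≤ a.coeff (i + 1) := by
      rw [ha']
      exact gp_mono γ hγ _ n i (by omega)
    linarith
end

section
/- The coefficients P_{n,k} defined by P_{1,0} = 1, P_{1,k} = 0 for k ≠ 0, and the recurrence P_{n+1,k} = C(k+2,2) P_{n,k} + (k+1)(2n-k+1) P_{n,k-1} + C(2n-k+2,2) P_{n,k-2}, are symmetric: P_{n,k} = P_{n,2n-2-k} for all n ≥ 1 and 0 ≤ k ≤ 2n-2. -/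
/-- The coefficients P_{n,k} (numbers of multiset permutations of {1,1,…,n,n} with k
descents), defined by their recurrence, are symmetric: P_{n,k} = P_{n,2n-2-k}. -/
theorem stmt5 (P : ℕ → ℤ → ℝ)
    (h10 : P 1 0 = 1) (h1 : ∀ k : ℤ, k ≠ 0 → P 1 k = 0)
    (hrec : ∀ n : ℕ, 1 ≤ n → ∀ k : ℤ,
      P (n + 1) k = ((k : ℝ) + 2) * ((k : ℝ) + 1) / 2 * P n k
        + ((k : ℝ) + 1) * (2 * (n : ℝ) - (k : ℝ) + 1) * P n (k - 1)
        + (2 * (n : ℝ) - (k : ℝ) + 2) * (2 * (n : ℝ) - (k : ℝ) + 1) / 2 * P n (k - 2)) :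
    ∀ n : ℕ, 1 ≤ n → ∀ k : ℤ, 0 ≤ k → k ≤ 2 * (n : ℤ) - 2 →
      P n k = P n (2 * (n : ℤ) - 2 - k) := by
  have key : ∀ n : ℕ, 1 ≤ n → ∀ k : ℤ, P n k = P n (2 * (n : ℤ) - 2 - k) := by
    intro n
    induction n with
    | zero => intro h; omega
    | succ m ih =>
      intro _ k
      by_cases hm : m = 0
      · subst hm
        have : (2 * ((1 : ℕ) : ℤ) - 2 - k) = -k := by push_cast; ring
        rw [this]
        by_cases hk : k = 0
        · subst hk; norm_num
        · rw [h1 k hk, h1 (-k) (by simpa using hk)]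
      · have hm1 : 1 ≤ m := Nat.one_le_iff_ne_zero.mpr hm
        have harg : (2 * ((m + 1 : ℕ) : ℤ) - 2 - k) = 2 * (m : ℤ) - k := by
          push_cast; ring
        rw [harg, hrec m hm1 k, hrec m hm1 (2 * (m : ℤ) - k)]
        have e1 : P m (2 * (m : ℤ) - k) = P m (k - 2) := by
          have h := ih hm1 (2 * (m : ℤ) - k)
          rw [show (2 * (m : ℤ) - 2 - (2 * (m : ℤ) - k)) = k - 2 by ring] at h
          exact h
        have e2 : P m (2 * (m : ℤ) - k - 1) = P m (k - 1) := by
          have h := ih hm1 (2 * (m : ℤ) - k - 1)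
          rw [show (2 * (m : ℤ) - 2 - (2 * (m : ℤ) - k - 1)) = k - 1 by ring] at h
          exact h
        have e3 : P m (2 * (m : ℤ) - k - 2) = P m k := by
          have h := ih hm1 (2 * (m : ℤ) - k - 2)
          rw [show (2 * (m : ℤ) - 2 - (2 * (m : ℤ) - k - 2)) = k by ring] at h
          exact h
        rw [e1, e2, e3]
        push_cast
        ring
  intro n hn k _ _
  exact key n hn k
end

section
/- Let P_{n,k} satisfy P_{1,0} = 1, P_{1,k} = 0 for k ≠ 0, and P_{n+1,k} = C(k+2,2) P_{n,k} + (k+1)(2n-k+1) P_{n,k-1} + C(2n-k+2,2) P_{n,k-2}. Then the polynomial P_n(x) = Σ_k P_{n,k} x^k is γ-positive: there exist nonnegative integers p_{n,k} such that P_n(x) = Σ_{k=0}^{n-1} p_{n,k} x^k (1+x)^{2n-2-2k}. -/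
/-!
Define `p n k` by `p 1 k = [k = 0]` and
`p (n+1) k = C(k+2,2) p n k + (k+1)(4n-4k+1) p n (k-1) + 4 C(2n+2-2k,2) p n (k-2)`,
a recurrence with nonnegative integer coefficients. The coefficient of `x^j` in
`∑ k, p n k x^k (1+x)^(2n-2-2k)` is `∑ k, p n k C(2n-2-2k, j-k)`, so it suffices that these
numbers obey the recurrence of `P n j`. That recurrence sends `x^k (1+x)^s` to
`C(k+2,2) x^k (1+x)^(s+2) + (k+2)(2s+1) x^(k+1) (1+x)^s + 2s(s-1) x^(k+2) (1+x)^(s-2)`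
(a binomial identity following from Pascal's rule and absorption), which is exactly the
recurrence of `p`.
-/

open Polynomial

def intChoose (s : ℕ) : ℤ → ℕ
  | Int.ofNat r => s.choose r
  | Int.negSucc _ => 0

namespace intChoose

@[simp]
theorem natCast (s r : ℕ) : intChoose s r = s.choose r := rfl

@[simp]
theorem zero_right (s : ℕ) : intChoose s 0 = 1 := s.choose_zero_right

theorem of_neg {s : ℕ} {r : ℤ} (hr : r < 0) : intChoose s r = 0 := by
  obtain ⟨t, rfl⟩ := Int.exists_eq_neg_ofNat hr.le
  rcases t with _ | t
  · simp at hr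
  · rfl

theorem of_lt {s : ℕ} {r : ℤ} (hr : (s : ℤ) < r) : intChoose s r = 0 := by
  lift r to ℕ using by omega
  exact Nat.choose_eq_zero_of_lt (by omega)

theorem succ_left (s : ℕ) (r : ℤ) :
    intChoose (s + 1) r = intChoose s r + intChoose s (r - 1) := by
  rcases lt_trichotomy r 0 with hr | rfl | hr
  · simp [of_neg hr, of_neg (by omega : r - 1 < 0)]
  · simp [of_neg (by omega : (-1 : ℤ) < 0)]
  · obtain ⟨t, rfl⟩ : ∃ t : ℕ, r = t + 1 := ⟨(r - 1).toNat, by omega⟩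
    rw [add_sub_cancel_right, ← Nat.cast_succ, natCast, natCast, natCast,
      Nat.choose_succ_succ', add_comm]

theorem mul_eq_mul_pred_pred (s : ℕ) (r : ℤ) :
    r * intChoose s r = s * intChoose (s - 1) (r - 1) := by
  rcases lt_trichotomy r 0 with hr | rfl | hr
  · simp [of_neg hr, of_neg (by omega : r - 1 < 0)]
  · simp [of_neg (by omega : (-1 : ℤ) < 0)]
  · obtain ⟨t, rfl⟩ : ∃ t : ℕ, r = t + 1 := ⟨(r - 1).toNat, by omega⟩
    rw [add_sub_cancel_right, ← Nat.cast_succ, natCast, natCast]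
    rcases s with _ | s
    · simp
    · rw [Nat.add_sub_cancel]
      exact_mod_cast (by rw [Nat.add_one_mul_choose_eq]; ring :
        (t + 1) * (s + 1).choose (t + 1) = (s + 1) * s.choose t)

theorem mul_eq_mul_pred_right (s : ℕ) (r : ℤ) :
    r * intChoose s r = (s + 1 - r) * intChoose s (r - 1) := by
  have h := mul_eq_mul_pred_pred (s + 1) r
  rw [succ_left] at h
  push_cast at h
  linear_combination h

theorem mul_sub_two_sub_two (s : ℕ) (r : ℤ) :
    (s : ℤ) * (s - 1) * intChoose (s - 2) (r - 2) = r * (r - 1) * intChoose s r := by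
  have h1 := mul_eq_mul_pred_pred s r
  have h2 := mul_eq_mul_pred_pred (s - 1) (r - 1)
  simp only [Nat.sub_sub, sub_sub, one_add_one_eq_two] at h2
  rcases s with _ | t
  · linear_combination -(r - 1) * h1
  · push_cast at h1 h2 ⊢
    linear_combination -(r - 1) * h1 - (t + 1) * h2

/-- Coefficient of `x^(K+r)` in the recurrence applied to `x^K (1+x)^s`. -/
theorem three_term_recurrence (s : ℕ) (K : ℝ) (r : ℤ) :
    (K + 2) * (K + 1) / 2 * intChoose (s + 2) r + (K + 2) * (2 * s + 1) * intChoose s (r - 1)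
        + 2 * s * (s - 1) * intChoose (s - 2) (r - 2)
      = (r + K + 2) * (r + K + 1) / 2 * intChoose s r
        + (r + K + 1) * (s + K + 3 - r) * intChoose s (r - 1)
        + (s + K + 4 - r) * (s + K + 3 - r) / 2 * intChoose s (r - 2) := by
  have pascal : (intChoose (s + 2) r : ℝ)
      = intChoose s r + 2 * intChoose s (r - 1) + intChoose s (r - 2) := by
    rw [succ_left, succ_left, succ_left, sub_sub]; push_cast; ring
  have ratio₁ : (r : ℝ) * intChoose s r = (s + 1 - r) * intChoose s (r - 1) := by
    exact_mod_cast mul_eq_mul_pred_right s r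
  have ratio₂ : ((r : ℝ) - 1) * intChoose s (r - 1) = (s + 2 - r) * intChoose s (r - 2) := by
    have := congrArg (Int.cast : ℤ → ℝ) (mul_eq_mul_pred_right s (r - 1))
    push_cast [sub_sub] at this
    linear_combination this
  have absorb : (s : ℝ) * (s - 1) * intChoose (s - 2) (r - 2) = r * (r - 1) * intChoose s r := by
    exact_mod_cast mul_sub_two_sub_two s r
  linear_combination (K + 2) * (K + 1) / 2 * pascal + 2 * absorb
    - (2 * K + 7 - 3 * r) / 2 * ratio₁ + (s + 2 - r + 2 * K + 3) / 2 * ratio₂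

end intChoose

def gammaCoeff : ℕ → ℕ → ℕ
  | 0, _ => 0
  | 1, k => if k = 0 then 1 else 0
  | n + 2, k => (k + 2).choose 2 * gammaCoeff (n + 1) k
      + (if k = 0 then 0 else (k + 1) * (2 * (2 * (n + 1) - 2 * k) + 1) * gammaCoeff (n + 1) (k - 1))
      + (if k ≤ 1 then 0 else 4 * (2 * (n + 1) + 2 - 2 * k).choose 2 * gammaCoeff (n + 1) (k - 2))

theorem gammaCoeff_eq_zero_of_le {n k : ℕ} (h : n ≤ k) : gammaCoeff n k = 0 := by
  induction n generalizing k with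
  | zero => rfl
  | succ n ih =>
    rcases n with _ | n
    · simp [gammaCoeff, show k ≠ 0 by omega]
    · simp only [gammaCoeff]
      rw [ih (by omega), ih (by omega)]
      rcases Nat.lt_or_ge k (n + 3) with hk | hk
      · obtain rfl : k = n + 2 := by omega
        simp [show 2 * (n + 1) + 2 - 2 * (n + 2) = 0 by omega]
      · simp [ih (show n + 1 ≤ k - 2 by omega)]

theorem sum_gammaCoeff_succ_mul {n : ℕ} (hn : 1 ≤ n) (g : ℕ → ℝ) :
    ∑ k ∈ Finset.range (n + 1), (gammaCoeff (n + 1) k : ℝ) * g k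
      = ∑ k ∈ Finset.range n, (gammaCoeff n k : ℝ) * ((k + 2).choose 2 * g k
          + (k + 2) * (2 * (2 * n - 2 - 2 * k : ℕ) + 1) * g (k + 1)
          + 4 * (2 * n - 2 - 2 * k).choose 2 * g (k + 2)) := by
  obtain ⟨m, rfl⟩ : ∃ m, n = m + 1 := ⟨n - 1, by omega⟩
  have stay : ∑ k ∈ Finset.range (m + 1 + 1), (((k + 2).choose 2 * gammaCoeff (m + 1) k : ℕ) : ℝ) * g k
      = ∑ k ∈ Finset.range (m + 1), (gammaCoeff (m + 1) k : ℝ) * ((k + 2).choose 2 * g k) := by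
    rw [Finset.sum_range_succ, gammaCoeff_eq_zero_of_le le_rfl]
    simp only [mul_zero, Nat.cast_zero, zero_mul, add_zero, Nat.cast_mul]
    exact Finset.sum_congr rfl fun k _ => by ring
  have shift₁ : ∑ k ∈ Finset.range (m + 1 + 1), ((if k = 0 then 0 else
        (k + 1) * (2 * (2 * (m + 1) - 2 * k) + 1) * gammaCoeff (m + 1) (k - 1) : ℕ) : ℝ) * g k
      = ∑ k ∈ Finset.range (m + 1), (gammaCoeff (m + 1) k : ℝ)
          * ((k + 2) * (2 * (2 * (m + 1) - 2 - 2 * k : ℕ) + 1) * g (k + 1)) := by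
    rw [Finset.sum_range_succ']
    refine (add_eq_left.mpr (by simp)).trans (Finset.sum_congr rfl fun k _ => ?_)
    rw [if_neg k.succ_ne_zero, Nat.add_sub_cancel,
      show 2 * (m + 1) - 2 * (k + 1) = 2 * (m + 1) - 2 - 2 * k by omega]
    push_cast
    ring
  have shift₂ : ∑ k ∈ Finset.range (m + 1 + 1), ((if k ≤ 1 then 0 else
        4 * (2 * (m + 1) + 2 - 2 * k).choose 2 * gammaCoeff (m + 1) (k - 2) : ℕ) : ℝ) * g k
      = ∑ k ∈ Finset.range (m + 1), (gammaCoeff (m + 1) k : ℝ)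
          * (4 * (2 * (m + 1) - 2 - 2 * k).choose 2 * g (k + 2)) := by
    rw [Finset.sum_range_succ', Finset.sum_range_succ', Finset.sum_range_succ,
      show 2 * (m + 1) - 2 - 2 * m = 0 by omega]
    norm_num
    refine Finset.sum_congr rfl fun k _ => ?_
    rw [show 2 * (m + 1) + 2 - 2 * (k + 1 + 1) = 2 * (m + 1) - 2 - 2 * k by omega,
      show k + 1 + 1 - 2 = k by omega]
    ring
  simp only [gammaCoeff, Nat.cast_add, add_mul (R := ℝ), Finset.sum_add_distrib]
  rw [stay, shift₁, shift₂, ← Finset.sum_add_distrib, ← Finset.sum_add_distrib]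
  exact Finset.sum_congr rfl fun k _ => by ring

noncomputable def gammaExpansionCoeff (n : ℕ) (j : ℤ) : ℝ :=
  ∑ k ∈ Finset.range n, (gammaCoeff n k : ℝ) * intChoose (2 * n - 2 - 2 * k) (j - k)

theorem gammaExpansionCoeff_succ {n : ℕ} (hn : 1 ≤ n) (j : ℤ) :
    gammaExpansionCoeff (n + 1) j
      = ((j : ℝ) + 2) * ((j : ℝ) + 1) / 2 * gammaExpansionCoeff n j
        + ((j : ℝ) + 1) * (2 * (n : ℝ) - (j : ℝ) + 1) * gammaExpansionCoeff n (j - 1)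
        + (2 * (n : ℝ) - (j : ℝ) + 2) * (2 * (n : ℝ) - (j : ℝ) + 1) / 2
          * gammaExpansionCoeff n (j - 2) := by
  unfold gammaExpansionCoeff
  rw [sum_gammaCoeff_succ_mul hn, Finset.mul_sum, Finset.mul_sum, Finset.mul_sum,
    ← Finset.sum_add_distrib, ← Finset.sum_add_distrib]
  refine Finset.sum_congr rfl fun k hk => ?_
  have hk : k < n := Finset.mem_range.mp hk
  obtain ⟨s, hs_nat⟩ : ∃ s, s + 2 + 2 * k = 2 * n := ⟨2 * n - 2 - 2 * k, by omega⟩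
  have hs : (s : ℝ) = 2 * n - 2 - 2 * k := by
    have h : (s : ℝ) + 2 + 2 * k = 2 * n := by exact_mod_cast hs_nat
    linarith
  rw [show 2 * n - 2 - 2 * k = s by omega, show 2 * (n + 1) - 2 - 2 * k = s + 2 by omega,
    show 2 * (n + 1) - 2 - 2 * (k + 1) = s by omega,
    show 2 * (n + 1) - 2 - 2 * (k + 2) = s - 2 by omega,
    show j - ((k + 1 : ℕ) : ℤ) = j - k - 1 by push_cast; ring,
    show j - ((k + 2 : ℕ) : ℤ) = j - k - 2 by push_cast; ring,
    show j - 1 - (k : ℤ) = j - k - 1 by ring, show j - 2 - (k : ℤ) = j - k - 2 by ring,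
    Nat.cast_choose_two, Nat.cast_choose_two]
  have key := intChoose.three_term_recurrence s k (j - k)
  push_cast at key ⊢
  rw [hs] at key ⊢
  linear_combination (gammaCoeff n k : ℝ) * key

theorem gammaExpansionCoeff_eq_zero_of_lt {n : ℕ} {j : ℤ} (hj : 2 * (n : ℤ) - 2 < j) :
    gammaExpansionCoeff n j = 0 :=
  Finset.sum_eq_zero fun k hk => by
    rw [intChoose.of_lt (by have := Finset.mem_range.mp hk; omega), Nat.cast_zero, mul_zero]

theorem eq_gammaExpansionCoeff (P : ℕ → ℤ → ℝ)
    (h10 : P 1 0 = 1) (h1 : ∀ k : ℤ, k ≠ 0 → P 1 k = 0)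
    (hrec : ∀ n : ℕ, 1 ≤ n → ∀ k : ℤ,
      P (n + 1) k = ((k : ℝ) + 2) * ((k : ℝ) + 1) / 2 * P n k
        + ((k : ℝ) + 1) * (2 * (n : ℝ) - (k : ℝ) + 1) * P n (k - 1)
        + (2 * (n : ℝ) - (k : ℝ) + 2) * (2 * (n : ℝ) - (k : ℝ) + 1) / 2 * P n (k - 2))
    {n : ℕ} (hn : 1 ≤ n) (j : ℤ) : P n j = gammaExpansionCoeff n j := by
  induction n, hn using Nat.le_induction generalizing j with
  | base =>
    simp only [gammaExpansionCoeff, gammaCoeff, Finset.sum_range_one]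
    rcases lt_trichotomy j 0 with hj | rfl | hj
    · simp [h1 j hj.ne, intChoose.of_neg hj]
    · simp [h10]
    · simp [h1 j hj.ne', intChoose.of_lt (by omega : ((0 : ℕ) : ℤ) < j)]
  | succ n hn ih => rw [hrec n hn, ih, ih, ih, gammaExpansionCoeff_succ hn]

theorem coeff_X_pow_mul_one_add_X_pow {R : Type*} [Semiring R] (k s m : ℕ) :
    ((X ^ k * (1 + X) ^ s : R[X])).coeff m = intChoose s (m - k) := by
  rw [coeff_X_pow_mul']
  split_ifs with hkm
  · rw [coeff_one_add_X_pow, ← Nat.cast_sub hkm, intChoose.natCast]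
  · rw [intChoose.of_neg (by omega), Nat.cast_zero]

/-- The polynomial Pₙ(x) = Σ_k P_{n,k} x^k, where P_{n,k} is defined by the recurrence,
is γ-positive: Pₙ(x) = Σ_{k=0}^{n-1} p_{n,k} x^k (1+x)^{2n-2-2k} with p_{n,k}
nonnegative integers. -/
theorem stmt6 (P : ℕ → ℤ → ℝ)
    (h10 : P 1 0 = 1) (h1 : ∀ k : ℤ, k ≠ 0 → P 1 k = 0)
    (hrec : ∀ n : ℕ, 1 ≤ n → ∀ k : ℤ,
      P (n + 1) k = ((k : ℝ) + 2) * ((k : ℝ) + 1) / 2 * P n k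
        + ((k : ℝ) + 1) * (2 * (n : ℝ) - (k : ℝ) + 1) * P n (k - 1)
        + (2 * (n : ℝ) - (k : ℝ) + 2) * (2 * (n : ℝ) - (k : ℝ) + 1) / 2 * P n (k - 2)) :
    ∃ p : ℕ → ℕ → ℕ, ∀ n : ℕ, 1 ≤ n →
      ∑ k ∈ Finset.range (2 * n - 1), C (P n k) * X ^ k =
        ∑ k ∈ Finset.range n, C ((p n k : ℝ)) * X ^ k * (1 + X) ^ (2 * n - 2 - 2 * k) := by
  refine ⟨gammaCoeff, fun n hn => Polynomial.ext fun m => ?_⟩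
  simp only [finsetSum_coeff, mul_assoc, coeff_C_mul, coeff_X_pow, mul_ite, mul_one, mul_zero,
    coeff_X_pow_mul_one_add_X_pow, Finset.sum_ite_eq, Finset.mem_range]
  change _ = gammaExpansionCoeff n m
  split_ifs with hm
  · exact eq_gammaExpansionCoeff P h10 h1 hrec hn m
  · exact (gammaExpansionCoeff_eq_zero_of_lt (by omega)).symm
end

section
/- Define p_{n,k} by p_{1,0} = 1, p_{1,k} = 0 for k ≥ 1, and p_{n+1,k} = C(k+2,2) p_{n,k} + (k+1)(4n-4k+1) p_{n,k-1} + 4·C(2n-2k+2,2) p_{n,k-2}. Then for all n ≥ 1, P_n(x) = Σ_{k=0}^{n-1} p_{n,k} x^k (1+x)^{2n-2-2k}, where P_n(x) = Σ_k P_{n,k} x^k and P_{n,k} satisfies P_{1,0}=1, P_{1,k}=0 (k≠0), P_{n+1,k} = C(k+2,2) P_{n,k} + (k+1)(2n-k+1) P_{n,k-1} + C(2n-k+2,2) P_{n,k-2}. -/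
open Polynomial

noncomputable def Lop2 (n : ℕ) (Q : ℝ[X]) : ℝ[X] :=
  (1 - X) ^ 2 * derivative (derivative (X ^ 2 * Q))
    + C (2 * (2 * (n : ℝ) + 1)) * ((1 - X) * derivative (X ^ 2 * Q))
    + C ((2 * (n : ℝ) + 2) * (2 * (n : ℝ) + 1)) * (X ^ 2 * Q)

theorem Lop2_sum (n : ℕ) {ι : Type*} (s : Finset ι) (f : ι → ℝ[X]) :
    Lop2 n (∑ i ∈ s, f i) = ∑ i ∈ s, Lop2 n (f i) := by
  simp only [Lop2, Finset.mul_sum, derivative_sum, ← Finset.sum_add_distrib]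

theorem Lop2_monomial (n k : ℕ) (a : ℝ) :
    Lop2 n (C a * X ^ k) =
      C (a * ((k : ℝ) + 2) * ((k : ℝ) + 1)) * X ^ k
        + C (2 * a * ((k : ℝ) + 2) * (2 * (n : ℝ) - (k : ℝ))) * X ^ (k + 1)
        + C (a * (2 * (n : ℝ) - (k : ℝ)) * (2 * (n : ℝ) - (k : ℝ) - 1)) * X ^ (k + 2) := by
  have h1 : X ^ 2 * (C a * X ^ k) = C a * X ^ (k + 2) := by ring
  rw [Lop2, h1, derivative_C_mul, derivative_X_pow]
  simp only [Nat.add_sub_cancel, derivative_C_mul, derivative_mul, derivative_C,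
    derivative_X_pow, zero_mul, zero_add]
  push_cast
  simp only [map_mul, map_add, map_sub, map_one, map_ofNat]
  ring

theorem Lop2_basis (n j e : ℕ) (hn : 2 * n = e + 2 * j + 2) (a : ℝ) :
    Lop2 n (C a * X ^ j * (1 + X) ^ e) =
      C (a * ((j : ℝ) + 2) * ((j : ℝ) + 1)) * (X ^ j * (1 + X) ^ (e + 2))
        + C (2 * a * ((j : ℝ) + 2) * (2 * (e : ℝ) + 1)) * (X ^ (j + 1) * (1 + X) ^ e)
        + C (4 * a * (e : ℝ) * ((e : ℝ) - 1)) * (X ^ (j + 2) * (1 + X) ^ (e - 2)) := by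
  have hn' : 2 * (n : ℝ) = (e : ℝ) + 2 * (j : ℝ) + 2 := by
    exact_mod_cast congrArg (Nat.cast : ℕ → ℝ) hn
  have h1 : X ^ 2 * (C a * X ^ j * (1 + X) ^ e) = C a * X ^ (j + 2) * (1 + X) ^ e := by ring
  rw [Lop2, h1]
  match e with
  | 0 =>
    simp only [pow_zero, mul_one, derivative_mul, derivative_C_mul, derivative_X_pow,
      Nat.add_sub_cancel, derivative_C, zero_mul, zero_add, mul_zero, add_zero, Nat.zero_sub,
      Nat.cast_zero, CharP.cast_eq_zero]
    rw [hn']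
    push_cast
    simp only [map_mul, map_add, map_sub, map_one, map_ofNat, map_zero]
    ring
  | 1 =>
    simp only [derivative_mul, derivative_C_mul, derivative_X_pow, derivative_pow,
      Nat.add_sub_cancel, derivative_add, derivative_one, derivative_X, derivative_C,
      zero_mul, zero_add, mul_zero, add_zero, pow_one, pow_zero, mul_one,
      Nat.cast_one, Nat.sub_self, Nat.cast_ofNat] at *
    rw [hn']
    push_cast
    simp only [map_mul, map_add, map_sub, map_one, map_ofNat, map_zero]
    ring
  | (e' + 2) =>
    simp only [derivative_mul, derivative_C_mul, derivative_X_pow, derivative_pow,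
      Nat.add_sub_cancel, derivative_add, derivative_one, derivative_X, derivative_C,
      zero_mul, zero_add, mul_zero, add_zero, mul_one] at *
    rw [hn']
    push_cast
    simp only [map_mul, map_add, map_sub, map_one, map_ofNat, map_zero]
    ring

/-- With p_{n,k} defined by p_{1,0}=1 and
p_{n+1,k} = C(k+2,2)p_{n,k} + (k+1)(4n-4k+1)p_{n,k-1} + 4·C(2n-2k+2,2)p_{n,k-2},
one has Pₙ(x) = Σ_{k=0}^{n-1} p_{n,k} x^k (1+x)^{2n-2-2k}, where P_{n,k}
satisfies its own recurrence. -/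
theorem stmt7 (P p : ℕ → ℤ → ℝ)
    (hP10 : P 1 0 = 1) (hP1 : ∀ k : ℤ, k ≠ 0 → P 1 k = 0)
    (hPrec : ∀ n : ℕ, 1 ≤ n → ∀ k : ℤ,
      P (n + 1) k = ((k : ℝ) + 2) * ((k : ℝ) + 1) / 2 * P n k
        + ((k : ℝ) + 1) * (2 * (n : ℝ) - (k : ℝ) + 1) * P n (k - 1)
        + (2 * (n : ℝ) - (k : ℝ) + 2) * (2 * (n : ℝ) - (k : ℝ) + 1) / 2 * P n (k - 2))
    (hp10 : p 1 0 = 1) (hp1 : ∀ k : ℤ, k ≠ 0 → p 1 k = 0)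
    (hprec : ∀ n : ℕ, 1 ≤ n → ∀ k : ℤ,
      p (n + 1) k = ((k : ℝ) + 2) * ((k : ℝ) + 1) / 2 * p n k
        + ((k : ℝ) + 1) * (4 * (n : ℝ) - 4 * (k : ℝ) + 1) * p n (k - 1)
        + 4 * ((2 * (n : ℝ) - 2 * (k : ℝ) + 2) * (2 * (n : ℝ) - 2 * (k : ℝ) + 1) / 2)
            * p n (k - 2)) :
    ∀ n : ℕ, 1 ≤ n →
      ∑ k ∈ Finset.range (2 * n - 1), C (P n k) * X ^ k =
        ∑ k ∈ Finset.range n, C (p n k) * X ^ k * (1 + X) ^ (2 * n - 2 - 2 * k) := by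
  -- vanishing of P outside [0, 2n-2]
  have hPv : ∀ n : ℕ, 1 ≤ n → ∀ k : ℤ, k < 0 ∨ 2 * (n : ℤ) - 1 ≤ k → P n k = 0 := by
    intro n hn
    induction n, hn using Nat.le_induction with
    | base => intro k hk; apply hP1; omega
    | succ n hn ih =>
      intro k hk
      rw [hPrec n hn k]
      rcases hk with hk | hk
      · rw [ih k (Or.inl (by omega)), ih (k - 1) (Or.inl (by omega)),
          ih (k - 2) (Or.inl (by omega))]; ring
      · have hk' : 2 * (n : ℤ) - 1 ≤ k - 2 := by push_cast at hk ⊢; omega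
        rw [ih k (Or.inr (by omega)), ih (k - 1) (Or.inr (by omega)), ih (k - 2) (Or.inr hk')]
        ring
  -- vanishing of p outside [0, n-1]
  have hpv : ∀ n : ℕ, 1 ≤ n → ∀ k : ℤ, k < 0 ∨ (n : ℤ) ≤ k → p n k = 0 := by
    intro n hn
    induction n, hn using Nat.le_induction with
    | base => intro k hk; apply hp1; omega
    | succ n hn ih =>
      intro k hk
      rw [hprec n hn k]
      rcases hk with hk | hk
      · rw [ih k (Or.inl (by omega)), ih (k - 1) (Or.inl (by omega)),
          ih (k - 2) (Or.inl (by omega))]; ring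
      · have hk1 : (n : ℤ) ≤ k := by push_cast at hk ⊢; omega
        have hk2 : (n : ℤ) ≤ k - 1 := by push_cast at hk ⊢; omega
        rw [ih k (Or.inr hk1), ih (k - 1) (Or.inr hk2)]
        rcases lt_or_ge (k - 2) (n : ℤ) with h | h
        · -- then k = n + 1, coefficient vanishes
          have hkn : k = (n : ℤ) + 1 := by push_cast at hk; omega
          have hc : 2 * (n : ℝ) - 2 * (k : ℝ) + 2 = 0 := by
            have : (k : ℝ) = (n : ℝ) + 1 := by exact_mod_cast congrArg (Int.cast : ℤ → ℝ) hkn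
            rw [this]; ring
          rw [hc]; ring
        · rw [ih (k - 2) (Or.inr h)]; ring
  -- step for the P side
  have hstepP : ∀ n : ℕ, 1 ≤ n →
      C (2 : ℝ) * ∑ k ∈ Finset.range (2 * (n + 1) - 1), C (P (n + 1) k) * X ^ k
        = Lop2 n (∑ k ∈ Finset.range (2 * n - 1), C (P n k) * X ^ k) := by
    intro n hn
    obtain ⟨N, hN⟩ : ∃ N, 2 * n = N + 1 := ⟨2 * n - 1, by omega⟩
    have hNn : 2 * n - 1 = N := by omega
    have h2n1 : 2 * (n + 1) - 1 = N + 2 := by omega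
    rw [hNn, h2n1]
    have hext : (∑ k ∈ Finset.range N, C (P n k) * X ^ k)
        = ∑ k ∈ Finset.range (N + 2), C (P n k) * X ^ k := by
      refine Finset.sum_subset (Finset.range_subset_range.2 (by omega)) fun k hk hk' => ?_
      simp only [Finset.mem_range] at hk hk'
      have : P n k = 0 := hPv n hn k (Or.inr (by omega))
      simp [this]
    rw [hext, Lop2_sum]
    have hmono : (∑ k ∈ Finset.range (N + 2), Lop2 n (C (P n k) * X ^ k))
        = (∑ k ∈ Finset.range (N + 2), C (P n k * ((k : ℝ) + 2) * ((k : ℝ) + 1)) * X ^ k)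
          + (∑ k ∈ Finset.range (N + 2),
              C (2 * P n k * ((k : ℝ) + 2) * (2 * (n : ℝ) - (k : ℝ))) * X ^ (k + 1))
          + (∑ k ∈ Finset.range (N + 2),
              C (P n k * (2 * (n : ℝ) - (k : ℝ)) * (2 * (n : ℝ) - (k : ℝ) - 1)) * X ^ (k + 2)) := by
      rw [← Finset.sum_add_distrib, ← Finset.sum_add_distrib]
      exact Finset.sum_congr rfl fun k _ => Lop2_monomial n k (P n k)
    rw [hmono, Finset.mul_sum]
    have hsplit : ∀ k ∈ Finset.range (N + 2),
        C (2 : ℝ) * (C (P (n + 1) k) * X ^ k)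
          = C (P n k * ((k : ℝ) + 2) * ((k : ℝ) + 1)) * X ^ k
            + C (2 * P n ((k : ℤ) - 1) * ((k : ℝ) + 1) * (2 * (n : ℝ) - (k : ℝ) + 1)) * X ^ k
            + C (P n ((k : ℤ) - 2) * (2 * (n : ℝ) - (k : ℝ) + 2) * (2 * (n : ℝ) - (k : ℝ) + 1))
                * X ^ k := by
      intro k _
      have hs : (2 : ℝ) * P (n + 1) k
          = P n k * ((k : ℝ) + 2) * ((k : ℝ) + 1)
            + 2 * P n ((k : ℤ) - 1) * ((k : ℝ) + 1) * (2 * (n : ℝ) - (k : ℝ) + 1)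
            + P n ((k : ℤ) - 2) * (2 * (n : ℝ) - (k : ℝ) + 2) * (2 * (n : ℝ) - (k : ℝ) + 1) := by
        rw [hPrec n hn (k : ℤ)]; push_cast; ring
      rw [← mul_assoc, ← C_mul, hs, C_add, C_add, add_mul, add_mul]
    rw [Finset.sum_congr rfl hsplit, Finset.sum_add_distrib, Finset.sum_add_distrib]
    have hm1 : P n (-1 : ℤ) = 0 := hPv n hn _ (Or.inl (by omega))
    have hm2 : P n (-2 : ℤ) = 0 := hPv n hn _ (Or.inl (by omega))
    have hN1 : P n ((N : ℤ) + 1) = 0 := hPv n hn _ (Or.inr (by push_cast; omega))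
    have hcN : 2 * (n : ℝ) - (N : ℝ) - 1 = 0 := by
      have : ((2 * n : ℕ) : ℝ) = ((N + 1 : ℕ) : ℝ) := by exact_mod_cast congrArg Nat.cast hN
      push_cast at this
      linarith
    congr 1
    congr 1
    · -- B sums
      conv_lhs => rw [Finset.sum_range_succ']
      conv_rhs => rw [Finset.sum_range_succ]
      congr 1
      · refine Finset.sum_congr rfl fun k _ => ?_
        have harg : (((k + 1 : ℕ)) : ℤ) - 1 = (k : ℤ) := by push_cast; ring
        rw [harg]
        congr 1
        push_cast
        ring
      · norm_num [hm1, hN1]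
    · -- D sums
      conv_lhs => rw [Finset.sum_range_succ', Finset.sum_range_succ']
      conv_rhs => rw [Finset.sum_range_succ, Finset.sum_range_succ]
      congr 1
      congr 1
      · refine Finset.sum_congr rfl fun k _ => ?_
        have harg : (((k + 1 + 1 : ℕ)) : ℤ) - 2 = (k : ℤ) := by push_cast; ring
        rw [harg]
        congr 1
        push_cast
        ring
      · norm_num [hm1, hcN]
      · norm_num [hm2, hN1]

  -- step for the p side
  have hstepp : ∀ n : ℕ, 1 ≤ n →
      C (2 : ℝ) * ∑ k ∈ Finset.range (n + 1),
          C (p (n + 1) k) * X ^ k * (1 + X) ^ (2 * (n + 1) - 2 - 2 * k)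
        = Lop2 n (∑ k ∈ Finset.range n, C (p n k) * X ^ k * (1 + X) ^ (2 * n - 2 - 2 * k)) := by
    intro n hn
    obtain ⟨m, rfl⟩ : ∃ m, n = m + 1 := ⟨n - 1, by omega⟩
    -- normalize exponents on the right
    have hR : (∑ k ∈ Finset.range (m + 1),
          C (p (m + 1) k) * X ^ k * (1 + X) ^ (2 * (m + 1) - 2 - 2 * k))
        = ∑ k ∈ Finset.range (m + 1),
            C (p (m + 1) k) * X ^ k * (1 + X) ^ (2 * m - 2 * k) := by
      refine Finset.sum_congr rfl fun k hk => ?_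
      rw [show 2 * (m + 1) - 2 - 2 * k = 2 * m - 2 * k from by omega]
    rw [hR, Lop2_sum]
    have hbasis : ∀ k ∈ Finset.range (m + 1),
        Lop2 (m + 1) (C (p (m + 1) k) * X ^ k * (1 + X) ^ (2 * m - 2 * k))
          = C (p (m + 1) k * ((k : ℝ) + 2) * ((k : ℝ) + 1))
              * (X ^ k * (1 + X) ^ (2 * m - 2 * k + 2))
            + C (2 * p (m + 1) k * ((k : ℝ) + 2) * (2 * ((2 * m - 2 * k : ℕ) : ℝ) + 1))
              * (X ^ (k + 1) * (1 + X) ^ (2 * m - 2 * k))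
            + C (4 * p (m + 1) k * ((2 * m - 2 * k : ℕ) : ℝ) * (((2 * m - 2 * k : ℕ) : ℝ) - 1))
              * (X ^ (k + 2) * (1 + X) ^ (2 * m - 2 * k - 2)) := by
      intro k hk
      simp only [Finset.mem_range] at hk
      exact Lop2_basis (m + 1) k (2 * m - 2 * k) (by omega) (p (m + 1) k)
    rw [Finset.sum_congr rfl hbasis, Finset.sum_add_distrib, Finset.sum_add_distrib]
    -- normalize exponents on the left
    have hL : (∑ k ∈ Finset.range (m + 1 + 1),
          C (p (m + 1 + 1) k) * X ^ k * (1 + X) ^ (2 * (m + 1 + 1) - 2 - 2 * k))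
        = ∑ k ∈ Finset.range (m + 2),
            C (p (m + 1 + 1) k) * X ^ k * (1 + X) ^ (2 * m + 2 - 2 * k) := by
      refine Finset.sum_congr (by norm_num) fun k hk => ?_
      rw [show 2 * (m + 1 + 1) - 2 - 2 * k = 2 * m + 2 - 2 * k from by omega]
    rw [hL, Finset.mul_sum]
    have hsplit : ∀ k ∈ Finset.range (m + 2),
        C (2 : ℝ) * (C (p (m + 1 + 1) k) * X ^ k * (1 + X) ^ (2 * m + 2 - 2 * k))
          = C (p (m + 1) k * ((k : ℝ) + 2) * ((k : ℝ) + 1))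
              * (X ^ k * (1 + X) ^ (2 * m + 2 - 2 * k))
            + C (2 * p (m + 1) ((k : ℤ) - 1) * ((k : ℝ) + 1) * (4 * (m : ℝ) - 4 * (k : ℝ) + 5))
              * (X ^ k * (1 + X) ^ (2 * m + 2 - 2 * k))
            + C (4 * p (m + 1) ((k : ℤ) - 2) * (2 * (m : ℝ) - 2 * (k : ℝ) + 4)
                  * (2 * (m : ℝ) - 2 * (k : ℝ) + 3))
              * (X ^ k * (1 + X) ^ (2 * m + 2 - 2 * k)) := by
      intro k _
      have hs : (2 : ℝ) * p (m + 1 + 1) k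
          = p (m + 1) k * ((k : ℝ) + 2) * ((k : ℝ) + 1)
            + 2 * p (m + 1) ((k : ℤ) - 1) * ((k : ℝ) + 1) * (4 * (m : ℝ) - 4 * (k : ℝ) + 5)
            + 4 * p (m + 1) ((k : ℤ) - 2) * (2 * (m : ℝ) - 2 * (k : ℝ) + 4)
                * (2 * (m : ℝ) - 2 * (k : ℝ) + 3) := by
        rw [hprec (m + 1) (by omega) (k : ℤ)]; push_cast; ring
      calc C (2 : ℝ) * (C (p (m + 1 + 1) k) * X ^ k * (1 + X) ^ (2 * m + 2 - 2 * k))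
          = C ((2 : ℝ) * p (m + 1 + 1) k) * (X ^ k * (1 + X) ^ (2 * m + 2 - 2 * k)) := by
            rw [C_mul]; ring
        _ = _ := by rw [hs, C_add, C_add, add_mul, add_mul]
    rw [Finset.sum_congr rfl hsplit, Finset.sum_add_distrib, Finset.sum_add_distrib]
    have hm1 : p (m + 1) (-1 : ℤ) = 0 := hpv (m + 1) (by omega) _ (Or.inl (by omega))
    have hm2 : p (m + 1) (-2 : ℤ) = 0 := hpv (m + 1) (by omega) _ (Or.inl (by omega))
    have hlast : p (m + 1) ((m : ℤ) + 1) = 0 := hpv (m + 1) (by omega) _ (Or.inr (by push_cast; omega))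
    congr 1
    congr 1
    · -- A sums
      conv_lhs => rw [Finset.sum_range_succ]
      have hz : C (p (m + 1) ((m + 1 : ℕ) : ℤ) * (((m + 1 : ℕ) : ℝ) + 2) * (((m + 1 : ℕ) : ℝ) + 1))
          * (X ^ (m + 1) * (1 + X) ^ (2 * m + 2 - 2 * (m + 1))) = 0 := by
        norm_num [hlast]
      rw [hz, add_zero]
      refine Finset.sum_congr rfl fun k hk => ?_
      simp only [Finset.mem_range] at hk
      rw [show 2 * m + 2 - 2 * k = 2 * m - 2 * k + 2 from by omega]
    · -- B sums
      conv_lhs => rw [Finset.sum_range_succ']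
      have hz : C (2 * p (m + 1) (((0 : ℕ) : ℤ) - 1) * (((0 : ℕ) : ℝ) + 1)
          * (4 * (m : ℝ) - 4 * ((0 : ℕ) : ℝ) + 5))
          * (X ^ (0 : ℕ) * (1 + X) ^ (2 * m + 2 - 2 * 0)) = 0 := by
        norm_num [hm1]
      rw [hz, add_zero]
      refine Finset.sum_congr rfl fun k hk => ?_
      simp only [Finset.mem_range] at hk
      have harg : (((k + 1 : ℕ)) : ℤ) - 1 = (k : ℤ) := by push_cast; ring
      rw [harg]
      have hcast : ((2 * m - 2 * k : ℕ) : ℝ) = 2 * (m : ℝ) - 2 * (k : ℝ) := by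
        rw [Nat.cast_sub (by omega)]; push_cast; ring
      rw [show 2 * m + 2 - 2 * (k + 1) = 2 * m - 2 * k from by omega]
      congr 2
      rw [hcast]; push_cast; ring
    · -- D sums
      conv_lhs => rw [Finset.sum_range_succ', Finset.sum_range_succ']
      conv_rhs => rw [Finset.sum_range_succ]
      have hz0 : C (4 * p (m + 1) (((0 : ℕ) : ℤ) - 2) * (2 * (m : ℝ) - 2 * ((0 : ℕ) : ℝ) + 4)
          * (2 * (m : ℝ) - 2 * ((0 : ℕ) : ℝ) + 3))
          * (X ^ (0 : ℕ) * (1 + X) ^ (2 * m + 2 - 2 * 0)) = 0 := by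
        norm_num [hm2]
      have hz1 : C (4 * p (m + 1) (((0 + 1 : ℕ)) - 2 : ℤ) * (2 * (m : ℝ) - 2 * ((0 + 1 : ℕ) : ℝ) + 4)
          * (2 * (m : ℝ) - 2 * ((0 + 1 : ℕ) : ℝ) + 3))
          * (X ^ ((0 : ℕ) + 1) * (1 + X) ^ (2 * m + 2 - 2 * (0 + 1))) = 0 := by
        norm_num [hm1]
      have hzD : C (4 * p (m + 1) ((m : ℕ) : ℤ) * ((2 * m - 2 * m : ℕ) : ℝ)
          * (((2 * m - 2 * m : ℕ) : ℝ) - 1))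
          * (X ^ (m + 2) * (1 + X) ^ (2 * m - 2 * m - 2)) = 0 := by
        norm_num
      rw [hz0, hz1, hzD, add_zero, add_zero, add_zero]
      refine Finset.sum_congr rfl fun k hk => ?_
      simp only [Finset.mem_range] at hk
      have harg : (((k + 1 + 1 : ℕ)) : ℤ) - 2 = (k : ℤ) := by push_cast; ring
      rw [harg]
      have hcast : ((2 * m - 2 * k : ℕ) : ℝ) = 2 * (m : ℝ) - 2 * (k : ℝ) := by
        rw [Nat.cast_sub (by omega)]; push_cast; ring
      rw [show 2 * m + 2 - 2 * (k + 1 + 1) = 2 * m - 2 * k - 2 from by omega]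
      congr 2
      rw [hcast]; push_cast; ring
  -- main induction
  intro n hn
  induction n, hn using Nat.le_induction with
  | base => simp [hP10, hp10]
  | succ n hn ih =>
    have h1 := hstepP n hn
    have h2 := hstepp n hn
    exact mul_left_cancel₀ (show (C (2 : ℝ)) ≠ 0 from C_ne_zero.mpr two_ne_zero)
      (by rw [h1, h2, ih])
end

section
/- Let Q_n(x) be the descent polynomial over permutations of the multiset {1,1,2,2,...,n,n,n+1}. Then Q_n(x) = (1 + 2nx) P_n(x) + x(1-x) P_n'(x), where P_n(x) is the descent polynomial over permutations of {1,1,...,n,n}. -/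
open Polynomial

/-- Number of descents of a word. -/
def des (l : List ℤ) : ℕ := ((l.zip l.tail).filter (fun p => p.2 < p.1)).length

/-- Type-B descents: prepend 0. -/
def desB (l : List ℤ) : ℕ := des (0 :: l)

/-- The multiset {1,1,2,2,...,n,n} as a list. -/
def baseList (n : ℕ) : List ℤ := (List.range n).flatMap (fun i => [(i : ℤ) + 1, (i : ℤ) + 1])

/-- All distinct arrangements (multiset permutations) of a list. -/
def arrangements (l : List ℤ) : List (List ℤ) := l.permutations.dedup

/-- Descent polynomial over arrangements of `l`. -/
noncomputable def desPoly (l : List ℤ) : Polynomial ℝ :=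
  ((arrangements l).map (fun w => (X : Polynomial ℝ) ^ des w)).sum

noncomputable def Ppoly (n : ℕ) : Polynomial ℝ := desPoly (baseList n)

noncomputable def Qpoly (n : ℕ) : Polynomial ℝ := desPoly (baseList n ++ [(n : ℤ) + 1])

/-- All signings of a word. -/
def signings : List ℤ → List (List ℤ)
  | [] => [[]]
  | a :: t => (signings t).flatMap (fun w => [a :: w, (-a) :: w])

/-- All signed permutations of the multiset given by `l`. -/
def signedWords (l : List ℤ) : List (List ℤ) := (arrangements l).flatMap signings

noncomputable def SpolyB (n : ℕ) : Polynomial ℝ :=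
  ((signedWords (baseList n)).map (fun w => (X : Polynomial ℝ) ^ desB w)).sum

/-- Signed permutations of {1,1,...,n,n,n+1} in which n+1 carries a plus sign. -/
def Dwords (n : ℕ) : List (List ℤ) :=
  (signedWords (baseList n ++ [(n : ℤ) + 1])).filter (fun w => ((n : ℤ) + 1) ∈ w)

noncomputable def TpolyB (n : ℕ) : Polynomial ℝ :=
  ((Dwords n).map (fun w => (X : Polynomial ℝ) ^ desB w)).sum

def PcountZ (n : ℕ) (k : ℤ) : ℕ :=
  ((arrangements (baseList n)).filter (fun w => (des w : ℤ) = k)).length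

def QcountN (n : ℕ) (k : ℕ) : ℕ :=
  ((arrangements (baseList n ++ [(n : ℤ) + 1])).filter (fun w => des w = k)).length

def ScountZ (n : ℕ) (k : ℤ) : ℕ :=
  ((signedWords (baseList n)).filter (fun w => (desB w : ℤ) = k)).length

def TcountZ (n : ℕ) (k : ℤ) : ℕ :=
  ((Dwords n).filter (fun w => (desB w : ℤ) = k)).length


/-
Every arrangement of {1,1,…,n,n,n+1} arises in exactly one way by inserting the largest letter
n+1 into one of the 2n+1 gaps of an arrangement w of {1,1,…,n,n}. The descent number stays
d = des w when n+1 lands inside a descent or at the end, and grows by one in the other 2n - d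
gaps, so w contributes (d+1)x^d + (2n-d)x^(d+1) = (1+2nx)x^d + x(1-x)(x^d)' to Qₙ.
-/

lemma des_cons_cons (a b : ℤ) (t : List ℤ) :
    des (a :: b :: t) = des (b :: t) + if b < a then 1 else 0 := by
  by_cases h : b < a <;> simp [des, h]

theorem sum_pow_des_insertIdx_of_forall_lt {R : Type*} [CommRing R] (x : R) (m : ℤ) :
    ∀ w : List ℤ, (∀ a ∈ w, a < m) →
    ∑ i ∈ Finset.range (w.length + 1), x ^ des (w.insertIdx i m)
      = (des w + 1) * x ^ des w + ((w.length : R) - des w) * x ^ (des w + 1)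
  | [], _ => by simp [des]
  | [a], hw => by
    have ha : a < m := hw a (by simp)
    simp [Finset.sum_range_succ, ha, not_lt.2 ha.le, des, add_comm]
  | a :: b :: t, hw => by
    have ha : a < m := hw a (by simp)
    have hb : b < m := hw b (by simp)
    have ih := sum_pow_des_insertIdx_of_forall_lt x m (b :: t) (fun c hc => hw c (.tail a hc))
    rw [Finset.sum_range_succ'] at ih
    rw [List.length_cons, Finset.sum_range_succ', Finset.sum_range_succ']
    simp only [List.insertIdx_zero, List.insertIdx_succ_cons, List.length_cons] at ih ⊢
    -- past the first two gaps the insertion no longer touches the pair `a, b`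
    simp only [des_cons_cons a b, pow_add x _ (ite _ _ _), ← Finset.sum_mul,
      eq_sub_of_add_eq ih, des_cons_cons m, des_cons_cons a m, if_pos ha, if_pos hb,
      if_neg (not_lt.2 ha.le)]
    by_cases hba : b < a <;> simp only [hba, if_true, if_false] <;> push_cast <;> ring

lemma add_X_mul_one_sub_X_mul_derivative_X_pow {R : Type*} [CommRing R] (L k : ℕ) :
    (1 + (L : R[X]) * X) * X ^ k + X * (1 - X) * derivative (X ^ k : R[X])
      = ((k : R[X]) + 1) * X ^ k + ((L : R[X]) - (k : R[X])) * X ^ (k + 1) := by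
  rcases k with _ | k
  · simp
  · rw [derivative_X_pow, map_natCast]
    push_cast
    ring

lemma mem_toFinset_arrangements {l w : List ℤ} : w ∈ (arrangements l).toFinset ↔ w.Perm l := by
  simp [arrangements, List.mem_permutations]

lemma desPoly_eq_sum_toFinset (l : List ℤ) :
    desPoly l = ∑ w ∈ (arrangements l).toFinset, (X : ℝ[X]) ^ des w :=
  (List.sum_toFinset _ (List.nodup_dedup _)).symm

lemma idxOf_insertIdx_of_notMem {m : ℤ} : ∀ {w : List ℤ} {i : ℕ}, m ∉ w → i ≤ w.length →
    (w.insertIdx i m).idxOf m = i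
  | _, 0, _, _ => by simp
  | a :: t, i + 1, hm, hi => by
    rw [List.mem_cons, not_or] at hm
    rw [List.insertIdx_succ_cons, List.idxOf_cons_ne _ (Ne.symm hm.1),
      idxOf_insertIdx_of_notMem hm.2 (Nat.le_of_succ_le_succ hi)]

lemma insertIdx_eraseIdx_idxOf {m : ℤ} {w : List ℤ} (hm : m ∈ w) :
    (w.eraseIdx (w.idxOf m)).insertIdx (w.idxOf m) m = w := by
  have h := List.insertIdx_eraseIdx_getElem (List.idxOf_lt_length_of_mem hm)
  rwa [List.getElem_idxOf] at h

theorem sum_toFinset_arrangements_append_singleton {M : Type*} [AddCommMonoid M]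
    (f : List ℤ → M) {l : List ℤ} {m : ℤ} (hm : m ∉ l) :
    ∑ w ∈ (arrangements (l ++ [m])).toFinset, f w
      = ∑ w ∈ (arrangements l).toFinset,
          ∑ i ∈ Finset.range (l.length + 1), f (w.insertIdx i m) := by
  rw [← Finset.sum_product']
  refine Finset.sum_nbij' (fun w => (w.eraseIdx (w.idxOf m), w.idxOf m))
    (fun p => p.1.insertIdx p.2 m) ?_ ?_ ?_ ?_ ?_
  · intro w hw
    rw [mem_toFinset_arrangements] at hw
    have hmw : m ∈ w := hw.mem_iff.mpr (by simp)
    have hlt : w.idxOf m < w.length := List.idxOf_lt_length_of_mem hmw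
    have hlen := List.length_eraseIdx_add_one hlt
    have hperm : w.Perm (m :: w.eraseIdx (w.idxOf m)) := by
      conv_lhs => rw [← insertIdx_eraseIdx_idxOf hmw]
      exact List.perm_insertIdx _ _ (by omega)
    rw [Finset.mem_product, mem_toFinset_arrangements, Finset.mem_range]
    refine ⟨(hperm.symm.trans (hw.trans (List.perm_append_singleton m l))).cons_inv, ?_⟩
    have hwl : w.length = l.length + 1 := by simpa using hw.length_eq
    exact hwl ▸ hlt
  · rintro ⟨w, i⟩ hp
    rw [Finset.mem_product, mem_toFinset_arrangements, Finset.mem_range] at hp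
    rw [mem_toFinset_arrangements]
    exact (List.perm_insertIdx m w (by rw [hp.1.length_eq]; omega)).trans
      ((hp.1.cons m).trans (List.perm_append_singleton m l).symm)
  · intro w hw
    exact insertIdx_eraseIdx_idxOf ((mem_toFinset_arrangements.mp hw).mem_iff.mpr (by simp))
  · rintro ⟨w, i⟩ hp
    rw [Finset.mem_product, mem_toFinset_arrangements, Finset.mem_range] at hp
    have hi : (w.insertIdx i m).idxOf m = i :=
      idxOf_insertIdx_of_notMem (fun h => hm (hp.1.mem_iff.mp h)) (by rw [hp.1.length_eq]; omega)
    simp only [hi, List.eraseIdx_insertIdx_self]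
  · intro w hw
    rw [insertIdx_eraseIdx_idxOf ((mem_toFinset_arrangements.mp hw).mem_iff.mpr (by simp))]

theorem desPoly_append_singleton_of_forall_lt {l : List ℤ} {m : ℤ} (hm : ∀ a ∈ l, a < m) :
    desPoly (l ++ [m])
      = (1 + (l.length : ℝ[X]) * X) * desPoly l + X * (1 - X) * derivative (desPoly l) := by
  rw [desPoly_eq_sum_toFinset,
    sum_toFinset_arrangements_append_singleton _ (fun h => (hm m h).false),
    desPoly_eq_sum_toFinset, Finset.mul_sum, derivative_sum, Finset.mul_sum,
    ← Finset.sum_add_distrib]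
  refine Finset.sum_congr rfl fun w hw => ?_
  have hwl := mem_toFinset_arrangements.mp hw
  rw [← hwl.length_eq,
    sum_pow_des_insertIdx_of_forall_lt X m w (fun a ha => hm a (hwl.mem_iff.mp ha)),
    add_X_mul_one_sub_X_mul_derivative_X_pow]

lemma length_baseList (n : ℕ) : (baseList n).length = 2 * n := by
  simp [baseList, mul_comm]

lemma lt_of_mem_baseList {n : ℕ} {a : ℤ} (ha : a ∈ baseList n) : a < n + 1 := by
  obtain ⟨i, hi, rfl⟩ : ∃ i < n, a = (i : ℤ) + 1 := by simpa [baseList] using ha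
  omega

/-- Qₙ(x) = (1 + 2nx) Pₙ(x) + x(1-x) Pₙ'(x). -/
theorem stmt8 (n : ℕ) :
    Qpoly n = (1 + 2 * (n : Polynomial ℝ) * X) * Ppoly n
      + X * (1 - X) * derivative (Ppoly n) := by
  rw [Qpoly, Ppoly, desPoly_append_singleton_of_forall_lt (fun _ => lt_of_mem_baseList),
    length_baseList]
  push_cast
  ring
end

section
/- Suppose f(x) = (1+2nx) g(x) + x(1-x) g'(x) where g is a symmetric polynomial of degree 2n-2 with nonnegative coefficients (g_i = g_{2n-2-i}). Then f is a polynomial of degree 2n-1, and f decomposes as f(x) = a(x) + x·g(x) where a(x) = (1+(2n-1)x)g(x) + x(1-x)g'(x) is symmetric of degree 2n-1 (a_k = a_{2n-1-k}). -/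
open Polynomial

lemma auxS (c : ℝ) (g : Polynomial ℝ) (k : ℕ) :
    ((1 + C c * X) * g + X * (1 - X) * derivative g).coeff (k+1)
    = (k+2) * g.coeff (k+1) + c * g.coeff k - k * g.coeff k := by
  have h1 : (1 + C c * X) * g + X * (1 - X) * derivative g
      = g + C c * (X * g) + X * derivative g - X * (X * derivative g) := by ring
  rw [h1]
  cases k with
  | zero =>
      simp [coeff_X_mul, coeff_derivative, mul_coeff_zero]
      ring
  | succ j =>
      simp [coeff_X_mul, coeff_derivative]
      ring

lemma aux0 (c : ℝ) (g : Polynomial ℝ) :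
    ((1 + C c * X) * g + X * (1 - X) * derivative g).coeff 0 = g.coeff 0 := by
  have h1 : (1 + C c * X) * g + X * (1 - X) * derivative g
      = g + C c * (X * g) + X * derivative g - X * (X * derivative g) := by ring
  rw [h1]
  simp [mul_coeff_zero]

/-- If f = (1+2nx)g + x(1-x)g' with g symmetric of degree 2n-2 with nonnegative
coefficients, then f has degree 2n-1 and f = a + x·g, where
a = (1+(2n-1)x)g + x(1-x)g' is symmetric of degree 2n-1. -/
theorem stmt19 (n : ℕ) (hn : 1 ≤ n) (g : Polynomial ℝ) (hg0 : g ≠ 0)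
    (hdeg : g.natDegree = 2 * n - 2)
    (hnonneg : ∀ i, 0 ≤ g.coeff i)
    (hsym : ∀ i ≤ 2 * n - 2, g.coeff i = g.coeff (2 * n - 2 - i))
    (f a : Polynomial ℝ)
    (hf : f = (1 + 2 * (n : Polynomial ℝ) * X) * g + X * (1 - X) * derivative g)
    (ha : a = (1 + (2 * (n : Polynomial ℝ) - 1) * X) * g + X * (1 - X) * derivative g) :
    f.natDegree = 2 * n - 1 ∧ f = a + X * g ∧
    a.natDegree = 2 * n - 1 ∧ (∀ k ≤ 2 * n - 1, a.coeff k = a.coeff (2 * n - 1 - k)) := by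
  obtain ⟨m, hm⟩ : ∃ m, 2 * n = m + 2 := ⟨2 * n - 2, by omega⟩
  have hm2 : 2 * n - 2 = m := by omega
  have hm1 : 2 * n - 1 = m + 1 := by omega
  rw [hm2] at hdeg hsym
  rw [hm1]
  -- rewrite the polynomial constants
  have h : 2 * (n : Polynomial ℝ) = (m : Polynomial ℝ) + 2 := by
    have := congrArg (Nat.cast : ℕ → Polynomial ℝ) hm
    push_cast at this
    linear_combination this
  have hc : (2 * (n : Polynomial ℝ) - 1) = C ((m : ℝ) + 1) := by
    rw [map_add, C_1, C_eq_natCast]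
    linear_combination h
  have hc2 : (2 * (n : Polynomial ℝ)) = C ((m : ℝ) + 2) := by
    rw [show ((m:ℝ) + 2) = ((m:ℝ) + 1) + 1 from by ring, map_add, map_add, C_1, C_eq_natCast]
    linear_combination h
  rw [hc] at ha
  rw [hc2] at hf
  -- coefficient facts about g
  have hgm : 0 < g.coeff m := by
    have hne : g.coeff m ≠ 0 := by
      have := leadingCoeff_ne_zero.mpr hg0
      rwa [leadingCoeff, hdeg] at this
    exact lt_of_le_of_ne (hnonneg m) (Ne.symm hne)
  have hghigh : ∀ j, m < j → g.coeff j = 0 := fun j hj =>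
    coeff_eq_zero_of_natDegree_lt (by omega : g.natDegree < j)
  -- a coefficients
  have ha0 : a.coeff 0 = g.coeff 0 := by rw [ha]; exact aux0 _ g
  have haS : ∀ k, a.coeff (k + 1)
      = (k+2) * g.coeff (k+1) + ((m : ℝ)+1) * g.coeff k - k * g.coeff k := by
    intro k; rw [ha]; exact auxS _ g k
  have hatop : a.coeff (m + 1) = g.coeff m := by
    rw [haS m, hghigh (m+1) (by omega)]
    ring
  have hadeg : a.natDegree = m + 1 := by
    apply le_antisymm
    · rw [natDegree_le_iff_coeff_eq_zero]
      intro j hj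
      obtain ⟨i, rfl⟩ : ∃ i, j = i + 1 := ⟨j - 1, by omega⟩
      rw [haS i, hghigh (i+1) (by omega), hghigh i (by omega)]
      ring
    · exact le_natDegree_of_ne_zero (by rw [hatop]; exact ne_of_gt hgm)
  -- f = a + X * g
  have hfa : f = a + X * g := by
    rw [hf, ha, show (C ((m:ℝ) + 2)) = C ((m:ℝ) + 1) + 1 from by
      rw [show (m:ℝ) + 2 = ((m:ℝ) + 1) + 1 from by ring, C_add, C_1]]
    ring
  have hfdeg : f.natDegree = m + 1 := by
    apply le_antisymm
    · rw [natDegree_le_iff_coeff_eq_zero]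
      intro j hj
      obtain ⟨i, rfl⟩ : ∃ i, j = i + 1 := ⟨j - 1, by omega⟩
      rw [hfa, coeff_add, coeff_X_mul, haS i, hghigh (i+1) (by omega),
        hghigh i (by omega)]
      ring
    · apply le_natDegree_of_ne_zero
      rw [hfa, coeff_add, coeff_X_mul, hatop]
      exact ne_of_gt (by linarith)
  refine ⟨hfdeg, hfa, hadeg, ?_⟩
  -- symmetry
  intro k hk
  rcases Nat.eq_zero_or_pos k with rfl | hkpos
  · simp only [Nat.sub_zero, ha0, hatop]
    exact hsym 0 (by omega)
  obtain ⟨j, rfl⟩ : ∃ j, k = j + 1 := ⟨k - 1, by omega⟩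
  rcases Nat.lt_or_ge j m with hjm | hjm
  · obtain ⟨i, rfl⟩ : ∃ i, m = j + 1 + i := ⟨m - j - 1, by omega⟩
    have h1 : j + 1 + i + 1 - (j + 1) = i + 1 := by omega
    rw [h1, haS j, haS i]
    have e1 : g.coeff j = g.coeff (j + 1 + i - j) := hsym j (by omega)
    have e2 : g.coeff (j+1) = g.coeff (j + 1 + i - (j+1)) := hsym (j+1) (by omega)
    have h2 : j + 1 + i - j = i + 1 := by omega
    have h3 : j + 1 + i - (j + 1) = i := by omega
    rw [h2] at e1; rw [h3] at e2
    rw [e1, e2]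
    push_cast
    ring
  · -- j ≥ m, and j + 1 ≤ m + 1 so j = m
    have hj : j = m := by omega
    rw [hj, show m + 1 - (m + 1) = 0 from by omega, ha0, hatop]
    exact (hsym 0 (by omega)).symm
end
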